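/- arXiv:2111.01265 — 2 statements merged into one kernel-verified Lean document; each statement's English description precedes it below -/
import Mathlib

section
/- Let H be an m×m Hermitian matrix with spectral decomposition H = Σⱼ λⱼEⱼ, and suppose u,v are parallel with respect to H (for each j, Eⱼeᵤ and Eⱼeᵥ are parallel vectors) with equal eigenvalue supports σᵤ(H) = σᵥ(H). If R is any matrix such that RH = HR and R eᵤ = eᵤ, then R eᵥ = eᵥ. -/
/-!
Since `R` commutes with `H = ∑ λⱼ Eⱼ` and the `λⱼ` are distinct, the off-diagonal blocks
`Eⱼ R Eₖ` vanish, so `R` commutes with every spectral projection `Eⱼ`. Hence `R` fixes each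
`Eⱼ eᵤ`. Parallelism together with equal supports makes each `Eⱼ eᵥ` a multiple of `Eⱼ eᵤ`,
so `R` fixes each `Eⱼ eᵥ`, and therefore their sum `eᵥ`.
-/

open Matrix

namespace OrthogonalIdempotents

variable {ι A K : Type*} [Fintype ι] [Field K] [Ring A] [Algebra K A] {E : ι → A}

theorem sum_smul_mul (he : OrthogonalIdempotents E) (c : ι → K) (j : ι) :
    (∑ k, c k • E k) * E j = c j • E j := by
  rw [Finset.sum_mul, Finset.sum_eq_single j]
  · rw [smul_mul_assoc, (he.idem j).eq]
  · intro k _ hkj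
    rw [smul_mul_assoc, he.ortho hkj, smul_zero]
  · exact absurd (Finset.mem_univ j)

theorem mul_sum_smul (he : OrthogonalIdempotents E) (c : ι → K) (j : ι) :
    E j * (∑ k, c k • E k) = c j • E j := by
  rw [Finset.mul_sum, Finset.sum_eq_single j]
  · rw [mul_smul_comm, (he.idem j).eq]
  · intro k _ hkj
    rw [mul_smul_comm, he.ortho hkj.symm, smul_zero]
  · exact absurd (Finset.mem_univ j)

theorem mul_mul_eq_zero_of_commute_sum_smul (he : OrthogonalIdempotents E) {c : ι → K}
    (hc : Function.Injective c) {R : A} (hR : Commute R (∑ k, c k • E k)) {j k : ι}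
    (hjk : j ≠ k) : E j * R * E k = 0 := by
  set H := ∑ k, c k • E k
  have h : c j • (E j * R * E k) = c k • (E j * R * E k) :=
    calc c j • (E j * R * E k) = E j * H * R * E k := by
          rw [he.mul_sum_smul, smul_mul_assoc, smul_mul_assoc]
      _ = E j * R * (H * E k) := by rw [mul_assoc (E j), ← hR.eq, ← mul_assoc, mul_assoc]
      _ = c k • (E j * R * E k) := by rw [he.sum_smul_mul, mul_smul_comm]
  rw [← sub_eq_zero, ← sub_smul] at h
  exact (smul_eq_zero.mp h).resolve_left (sub_ne_zero.mpr (hc.ne hjk))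

end OrthogonalIdempotents

namespace CompleteOrthogonalIdempotents

variable {ι A K : Type*} [Fintype ι] [Field K] [Ring A] [Algebra K A] {E : ι → A}

theorem commute_of_commute_sum_smul (he : CompleteOrthogonalIdempotents E) {c : ι → K}
    (hc : Function.Injective c) {R : A} (hR : Commute R (∑ k, c k • E k)) (j : ι) :
    Commute R (E j) := by
  have hblock {k l : ι} (hkl : k ≠ l) : E k * R * E l = 0 :=
    he.toOrthogonalIdempotents.mul_mul_eq_zero_of_commute_sum_smul hc hR hkl
  have hright : R * E j = E j * R * E j := by
    conv_lhs => rw [← one_mul R, ← he.complete, Finset.sum_mul, Finset.sum_mul]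
    exact Finset.sum_eq_single j (fun _ _ hkj => hblock hkj) (absurd (Finset.mem_univ j))
  have hleft : E j * R = E j * R * E j := by
    conv_lhs => rw [← mul_one (E j * R), ← he.complete, Finset.mul_sum]
    exact Finset.sum_eq_single j (fun _ _ hkj => hblock hkj.symm) (absurd (Finset.mem_univ j))
  exact hright.trans hleft.symm

end CompleteOrthogonalIdempotents

theorem Matrix.mulVec_eq_self_of_parallel {ι n K : Type*} [Fintype ι] [Fintype n]
    [DecidableEq n] [Field K] {E : ι → Matrix n n K} (he : CompleteOrthogonalIdempotents E)
    {R : Matrix n n K} (hR : ∀ j, Commute R (E j)) {x y : n → K}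
    (hpar : ∀ j, ∃ c : K, E j *ᵥ x = c • E j *ᵥ y) (hsupp : ∀ j, E j *ᵥ x = 0 → E j *ᵥ y = 0)
    (hx : R *ᵥ x = x) : R *ᵥ y = y := by
  have hfix (j : ι) : R *ᵥ (E j *ᵥ y) = E j *ᵥ y := by
    obtain ⟨c, hc⟩ := hpar j
    by_cases hc0 : c = 0
    · rw [hsupp j (by rw [hc, hc0, zero_smul]), mulVec_zero]
    have hy : E j *ᵥ y = c⁻¹ • E j *ᵥ x := by rw [hc, smul_smul, inv_mul_cancel₀ hc0, one_smul]
    rw [hy, mulVec_smul, mulVec_mulVec, (hR j).eq, ← mulVec_mulVec, hx]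
  have hdecomp : ∑ j, E j *ᵥ y = y := by rw [← Matrix.sum_mulVec, he.complete, one_mulVec]
  calc R *ᵥ y = ∑ j, R *ᵥ (E j *ᵥ y) := by rw [← Matrix.mulVec_sum, hdecomp]
    _ = y := by simp only [hfix, hdecomp]

theorem stmt5_general {m r : ℕ} (H : Matrix (Fin m) (Fin m) ℂ)
    (lam : Fin r → ℝ) (E : Fin r → Matrix (Fin m) (Fin m) ℂ)
    (hlam : Function.Injective lam)
    (hEidem : ∀ j, E j * E j = E j)
    (hEorth : ∀ j k, j ≠ k → E j * E k = 0)
    (hEsum : ∑ j, E j = 1)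
    (hspec : H = ∑ j, (lam j : ℂ) • E j)
    (u v : Fin m)
    (hpar : ∀ j, ∃ c : ℂ,
      (E j) *ᵥ (Pi.single u 1 : Fin m → ℂ) = c • ((E j) *ᵥ (Pi.single v 1 : Fin m → ℂ)))
    (hsupp : ∀ j, (E j) *ᵥ (Pi.single u 1 : Fin m → ℂ) = 0 ↔
      (E j) *ᵥ (Pi.single v 1 : Fin m → ℂ) = 0)
    (R : Matrix (Fin m) (Fin m) ℂ)
    (hRH : R * H = H * R)
    (hRu : R *ᵥ (Pi.single u 1 : Fin m → ℂ) = Pi.single u 1) :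
    R *ᵥ (Pi.single v 1 : Fin m → ℂ) = Pi.single v 1 := by
  have he : CompleteOrthogonalIdempotents E := ⟨⟨hEidem, fun j k hjk => hEorth j k hjk⟩, hEsum⟩
  have hcomm : ∀ j, Commute R (E j) :=
    he.commute_of_commute_sum_smul (Complex.ofReal_injective.comp hlam) (hspec ▸ hRH)
  exact mulVec_eq_self_of_parallel he hcomm hpar (fun j => (hsupp j).mp) hRu

theorem stmt5 {m r : ℕ} (H : Matrix (Fin m) (Fin m) ℂ)
    (lam : Fin r → ℝ) (E : Fin r → Matrix (Fin m) (Fin m) ℂ)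
    (hH : H.IsHermitian)
    (hlam : Function.Injective lam)
    (hEherm : ∀ j, (E j).IsHermitian)
    (hEidem : ∀ j, E j * E j = E j)
    (hEorth : ∀ j k, j ≠ k → E j * E k = 0)
    (hEsum : ∑ j, E j = 1)
    (hEnz : ∀ j, E j ≠ 0)
    (hspec : H = ∑ j, (lam j : ℂ) • E j)
    (u v : Fin m)
    (hpar : ∀ j, ∃ c : ℂ,
      (E j) *ᵥ (Pi.single u 1 : Fin m → ℂ) = c • ((E j) *ᵥ (Pi.single v 1 : Fin m → ℂ)))
    (hsupp : ∀ j, (E j) *ᵥ (Pi.single u 1 : Fin m → ℂ) = 0 ↔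
      (E j) *ᵥ (Pi.single v 1 : Fin m → ℂ) = 0)
    (R : Matrix (Fin m) (Fin m) ℂ)
    (hRH : R * H = H * R)
    (hRu : R *ᵥ (Pi.single u 1 : Fin m → ℂ) = Pi.single u 1) :
    R *ᵥ (Pi.single v 1 : Fin m → ℂ) = Pi.single v 1 :=
  stmt5_general H lam E hlam hEidem hEorth hEsum hspec u v hpar hsupp R hRH hRu
end

section
/- Indices u and v are strongly cospectral with respect to a Hermitian matrix H if and only if there exists a unitary matrix R which is a polynomial in H, commutes with H, and satisfies R eᵤ = eᵥ. -/
/-!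
The spectral idempotents `E j` are complete and orthogonal, so `a ↦ ∑ j, a j • E j` is an injective
`star`-compatible algebra homomorphism `(Fin r → ℂ) → Matrix`. By Lagrange interpolation at the
distinct eigenvalues, its image is exactly the set of polynomials in `H`. Hence the unitary
polynomials in `H` are the matrices `∑ j, a j • E j` with `|a j| = 1`. Such a matrix sends `eᵤ` to
`eᵥ` iff `a j • E j eᵤ = E j eᵥ` for every `j`, which is strong cospectrality with `c = conj (a j)`.
-/
open Matrix Polynomial

theorem Complex.mem_unitary_iff_norm_eq_one {z : ℂ} : z ∈ unitary ℂ ↔ ‖z‖ = 1 := by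
  rw [Unitary.mem_iff_star_mul_self, Complex.star_def, Complex.conj_mul']
  norm_cast
  exact pow_eq_one_iff_of_nonneg (norm_nonneg z) two_ne_zero

theorem Unitary.exists_eq_smul_iff {R M : Type*} [Monoid R] [StarMul R] [MulAction R M]
    {x y : M} : (∃ c ∈ unitary R, x = c • y) ↔ ∃ c ∈ unitary R, c • x = y := by
  constructor
  · rintro ⟨c, hc, rfl⟩
    refine ⟨star c, Unitary.star_mem hc, ?_⟩
    rw [smul_smul, Unitary.star_mul_self_of_mem hc, one_smul]
  · rintro ⟨c, hc, rfl⟩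
    refine ⟨star c, Unitary.star_mem hc, ?_⟩
    rw [smul_smul, Unitary.star_mul_self_of_mem hc, one_smul]

theorem Pi.mem_unitary_iff {ι : Type*} {R : ι → Type*} [∀ i, Monoid (R i)] [∀ i, StarMul (R i)]
    {a : ∀ i, R i} : a ∈ unitary (∀ i, R i) ↔ ∀ i, a i ∈ unitary (R i) := by
  simp only [Unitary.mem_iff, funext_iff, forall_and, Pi.mul_apply, Pi.star_apply, Pi.one_apply]

namespace OrthogonalIdempotents

variable {R A ι : Type*} [CommSemiring R] [Semiring A] [Algebra R A] [Fintype ι]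
  {e : ι → A}

theorem sum_smul_mul_s12 (he : OrthogonalIdempotents e) (a : ι → R) (k : ι) :
    (∑ i, a i • e i) * e k = a k • e k := by
  rw [Finset.sum_mul, Finset.sum_eq_single k
    (fun i _ hik => by rw [smul_mul_assoc, he.ortho hik, smul_zero]) (by simp),
    smul_mul_assoc, (he.idem k).eq]

theorem mul_sum_smul_s12 (he : OrthogonalIdempotents e) (a : ι → R) (k : ι) :
    e k * (∑ i, a i • e i) = a k • e k := by
  rw [Finset.mul_sum, Finset.sum_eq_single k
    (fun i _ hik => by rw [mul_smul_comm, he.ortho hik.symm, smul_zero]) (by simp),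
    mul_smul_comm, (he.idem k).eq]

end OrthogonalIdempotents

namespace CompleteOrthogonalIdempotents

section Semiring

variable {R A ι : Type*} [CommSemiring R] [Semiring A] [Algebra R A] [Fintype ι]
  {e : ι → A} (he : CompleteOrthogonalIdempotents e)

def piAlgHom : (ι → R) →ₐ[R] A where
  toFun a := ∑ i, a i • e i
  map_one' := by simp [he.complete]
  map_mul' a b := by
    rw [Finset.mul_sum]
    refine Finset.sum_congr rfl fun k _ => ?_
    rw [mul_smul_comm, he.toOrthogonalIdempotents.sum_smul_mul_s12, smul_smul, Pi.mul_apply, mul_comm]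
  map_zero' := by simp
  map_add' a b := by simp [add_smul, Finset.sum_add_distrib]
  commutes' c := by simp [Algebra.algebraMap_eq_smul_one, ← Finset.smul_sum, he.complete]

theorem piAlgHom_apply (a : ι → R) : he.piAlgHom a = ∑ i, a i • e i := rfl

theorem piAlgHom_mul (a : ι → R) (k : ι) : he.piAlgHom a * e k = a k • e k :=
  he.toOrthogonalIdempotents.sum_smul_mul_s12 a k

theorem mul_piAlgHom (a : ι → R) (k : ι) : e k * he.piAlgHom a = a k • e k :=
  he.toOrthogonalIdempotents.mul_sum_smul_s12 a k

theorem aeval_piAlgHom (a : ι → R) (p : R[X]) :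
    aeval (he.piAlgHom a) p = he.piAlgHom fun i => p.eval (a i) := by
  rw [aeval_algHom_apply, aeval_pi_apply]
  simp

end Semiring

section Ring

variable {R A ι : Type*} [CommRing R] [IsCancelMulZero R] [Ring A] [Algebra R A]
  [Module.IsTorsionFree R A] [Fintype ι] {e : ι → A} (he : CompleteOrthogonalIdempotents e)

theorem piAlgHom_injective (hne : ∀ i, e i ≠ 0) : Function.Injective (he.piAlgHom (R := R)) := by
  intro a b hab
  funext k
  apply smul_left_injective R (hne k)
  simp only [← he.piAlgHom_mul, hab]

end Ring

section Star

variable {R A ι : Type*} [CommSemiring R] [StarRing R] [Semiring A] [StarRing A] [Algebra R A]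
  [StarModule R A] [Fintype ι] {e : ι → A} (he : CompleteOrthogonalIdempotents e)

theorem star_piAlgHom (hsa : ∀ i, IsSelfAdjoint (e i)) (a : ι → R) :
    star (he.piAlgHom a) = he.piAlgHom (star a) := by
  simp only [piAlgHom_apply, star_sum, star_smul, (hsa _).star_eq, Pi.star_apply]

end Star

theorem piAlgHom_mem_unitary_iff {R A ι : Type*} [CommRing R] [IsCancelMulZero R] [StarRing R]
    [Ring A] [StarRing A] [Algebra R A] [StarModule R A] [Module.IsTorsionFree R A] [Fintype ι]
    {e : ι → A} (he : CompleteOrthogonalIdempotents e) (hsa : ∀ i, IsSelfAdjoint (e i))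
    (hne : ∀ i, e i ≠ 0) {a : ι → R} : he.piAlgHom a ∈ unitary A ↔ a ∈ unitary (ι → R) := by
  have hinj := he.piAlgHom_injective (R := R) hne
  rw [Unitary.mem_iff, Unitary.mem_iff, he.star_piAlgHom hsa, ← map_mul, ← map_mul,
    hinj.eq_iff' (map_one _), hinj.eq_iff' (map_one _)]

section Field

variable {K A ι : Type*} [Field K] [Semiring A] [Algebra K A] [Fintype ι] [DecidableEq ι]
  {e : ι → A} (he : CompleteOrthogonalIdempotents e)

theorem aeval_piAlgHom_interpolate {c : ι → K} (hc : Function.Injective c) (a : ι → K) :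
    aeval (he.piAlgHom c) (Lagrange.interpolate Finset.univ c a) = he.piAlgHom a := by
  rw [aeval_piAlgHom]
  congr 1
  funext i
  exact Lagrange.eval_interpolate_at_node a hc.injOn (Finset.mem_univ i)

theorem exists_eq_aeval_piAlgHom_iff {c : ι → K} (hc : Function.Injective c) {x : A} :
    (∃ p : K[X], x = aeval (he.piAlgHom c) p) ↔ ∃ a : ι → K, x = he.piAlgHom a := by
  constructor
  · rintro ⟨p, rfl⟩
    exact ⟨_, he.aeval_piAlgHom c p⟩
  · rintro ⟨a, rfl⟩
    exact ⟨_, (he.aeval_piAlgHom_interpolate hc a).symm⟩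

end Field

theorem piAlgHom_mulVec_eq_iff {R ι n : Type*} [CommSemiring R] [Fintype ι] [Fintype n]
    [DecidableEq n] {e : ι → Matrix n n R} (he : CompleteOrthogonalIdempotents e) (a : ι → R)
    (x y : n → R) : he.piAlgHom a *ᵥ x = y ↔ ∀ i, a i • (e i *ᵥ x) = e i *ᵥ y := by
  constructor
  · rintro rfl i
    rw [mulVec_mulVec, he.mul_piAlgHom, smul_mulVec]
  · intro h
    rw [piAlgHom_apply, sum_mulVec]
    simp only [smul_mulVec, h, ← sum_mulVec, he.complete, one_mulVec]

end CompleteOrthogonalIdempotents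

theorem stmt12_general {m r : ℕ} (H : Matrix (Fin m) (Fin m) ℂ)
    (lam : Fin r → ℝ) (E : Fin r → Matrix (Fin m) (Fin m) ℂ)
    (hlam : Function.Injective lam)
    (hEherm : ∀ j, (E j).IsHermitian)
    (hEidem : ∀ j, E j * E j = E j)
    (hEorth : ∀ j k, j ≠ k → E j * E k = 0)
    (hEsum : ∑ j, E j = 1)
    (hEnz : ∀ j, E j ≠ 0)
    (hspec : H = ∑ j, (lam j : ℂ) • E j)
    (u v : Fin m) :
    (∀ j, ∃ c : ℂ, ‖c‖ = 1 ∧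
        (E j) *ᵥ (Pi.single u 1 : Fin m → ℂ) = c • ((E j) *ᵥ (Pi.single v 1 : Fin m → ℂ)))
      ↔ ∃ R : Matrix (Fin m) (Fin m) ℂ,
          (∃ p : Polynomial ℂ, R = Polynomial.aeval H p) ∧
          R * H = H * R ∧ Rᴴ * R = 1 ∧ R * Rᴴ = 1 ∧
          R *ᵥ (Pi.single u 1 : Fin m → ℂ) = Pi.single v 1 := by
  have he : CompleteOrthogonalIdempotents E := ⟨⟨hEidem, fun j k hjk => hEorth j k hjk⟩, hEsum⟩
  have hc : Function.Injective fun j => (lam j : ℂ) := Complex.ofReal_injective.comp hlam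
  replace hspec : H = he.piAlgHom fun j => (lam j : ℂ) := hspec
  calc _ ↔ ∀ j, ∃ a ∈ unitary ℂ, a • (E j *ᵥ Pi.single u 1) = E j *ᵥ Pi.single v 1 := by
        simp only [← Complex.mem_unitary_iff_norm_eq_one, ← Unitary.exists_eq_smul_iff]
    _ ↔ ∃ a ∈ unitary (Fin r → ℂ), he.piAlgHom a *ᵥ Pi.single u 1 = Pi.single v 1 := by
        simp only [Pi.mem_unitary_iff, he.piAlgHom_mulVec_eq_iff, ← forall_and, Classical.skolem]
    _ ↔ _ := by
        constructor
        · rintro ⟨a, ha, hau⟩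
          obtain ⟨hunit₁, hunit₂⟩ := (he.piAlgHom_mem_unitary_iff hEherm hEnz).2 ha
          refine ⟨he.piAlgHom a, ?_, ?_, hunit₁, hunit₂, hau⟩
          · rw [hspec, he.exists_eq_aeval_piAlgHom_iff hc]
            exact ⟨a, rfl⟩
          · rw [hspec, ← map_mul, mul_comm, map_mul]
        · rintro ⟨R, hpoly, -, hunit₁, hunit₂, hRu⟩
          rw [hspec, he.exists_eq_aeval_piAlgHom_iff hc] at hpoly
          obtain ⟨a, rfl⟩ := hpoly
          exact ⟨a, (he.piAlgHom_mem_unitary_iff hEherm hEnz).1 ⟨hunit₁, hunit₂⟩, hRu⟩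

theorem stmt12 {m r : ℕ} (H : Matrix (Fin m) (Fin m) ℂ)
    (lam : Fin r → ℝ) (E : Fin r → Matrix (Fin m) (Fin m) ℂ)
    (hH : H.IsHermitian)
    (hlam : Function.Injective lam)
    (hEherm : ∀ j, (E j).IsHermitian)
    (hEidem : ∀ j, E j * E j = E j)
    (hEorth : ∀ j k, j ≠ k → E j * E k = 0)
    (hEsum : ∑ j, E j = 1)
    (hEnz : ∀ j, E j ≠ 0)
    (hspec : H = ∑ j, (lam j : ℂ) • E j)
    (u v : Fin m) :
    (∀ j, ∃ c : ℂ, ‖c‖ = 1 ∧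
        (E j) *ᵥ (Pi.single u 1 : Fin m → ℂ) = c • ((E j) *ᵥ (Pi.single v 1 : Fin m → ℂ)))
      ↔ ∃ R : Matrix (Fin m) (Fin m) ℂ,
          (∃ p : Polynomial ℂ, R = Polynomial.aeval H p) ∧
          R * H = H * R ∧ Rᴴ * R = 1 ∧ R * Rᴴ = 1 ∧
          R *ᵥ (Pi.single u 1 : Fin m → ℂ) = Pi.single v 1 :=
  stmt12_general H lam E hlam hEherm hEidem hEorth hEsum hEnz hspec u v
end
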